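/- Removing from a finite weighted graph all edges of weight strictly less than θ does not change the connected components if and only if every removed edge ⟨k,l⟩ satisfies A*_kl ≥ θ in the remaining graph; in particular, if A_kl < A*_kl computed in G minus the edge ⟨k,l⟩, then deleting edge ⟨k,l⟩ alone does not change the connected components of G. -/

import Mathlib

/-!
Since the pruned graph `H` is a subgraph of `G`, both have the same components exactly when the
endpoints of every edge of `G` are connected in `H`. An edge kept by thresholding trivially is;
a removed edge `⟨k,l⟩` is connected in `thresholded G A θ` exactly when some walk there joins
`k` and `l`, and every such walk has bottleneck `≥ θ`. Deleting one edge `⟨k,l⟩` is the same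
situation: it suffices that `k` and `l` stay connected.
-/

open SimpleGraph

/-- The graph obtained from `G` by keeping only the edges of weight `≥ θ`. -/
def thresholded {V : Type*} (G : SimpleGraph V) (A : Sym2 V → ℝ) (θ : ℝ) :
    SimpleGraph V where
  Adj i j := G.Adj i j ∧ θ ≤ A s(i, j)
  symm := by
    constructor
    intro i j h
    exact ⟨h.1.symm, by rw [Sym2.eq_swap]; exact h.2⟩
  loopless := by constructor; intro i h; exact G.irrefl h.1

/-- The bottleneck (minimal edge weight) of a walk, with value `⊤` for the empty walk. -/
noncomputable def bottleneck {V : Type*} {G : SimpleGraph V} (A : Sym2 V → ℝ) {i j : V}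
    (p : G.Walk i j) : WithTop ℝ :=
  p.edges.foldr (fun e m => min (A e : WithTop ℝ) m) ⊤

namespace SimpleGraph

variable {V : Type*} {G H : SimpleGraph V}

theorem reachable_le_of_adj_le_reachable (h : G.Adj ≤ H.Reachable) :
    G.Reachable ≤ H.Reachable := by
  rw [reachable_eq_reflTransGen, reachable_eq_reflTransGen] at *
  exact Relation.reflTransGen_closed h

theorem forall_reachable_iff_of_le (hHG : H ≤ G) :
    (∀ i j, G.Reachable i j ↔ H.Reachable i j) ↔ ∀ a b, G.Adj a b → H.Reachable a b := by
  refine ⟨fun h a b hab => (h a b).mp hab.reachable, fun h i j => ⟨?_, (·.mono hHG)⟩⟩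
  exact reachable_le_of_adj_le_reachable h i j

theorem adj_le_reachable_deleteEdges_of_reachable {k l : V}
    (hkl : (G.deleteEdges {s(k, l)}).Reachable k l) :
    G.Adj ≤ (G.deleteEdges {s(k, l)}).Reachable := by
  intro a b hab
  by_cases he : s(a, b) = s(k, l)
  · rcases Sym2.eq_iff.mp he with ⟨rfl, rfl⟩ | ⟨rfl, rfl⟩
    · exact hkl
    · exact hkl.symm
  · exact Adj.reachable (deleteEdges_adj.mpr ⟨hab, he⟩)

end SimpleGraph

section Thresholding

variable {V : Type*} (G : SimpleGraph V) (A : Sym2 V → ℝ) (θ : ℝ)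

theorem thresholded_le : thresholded G A θ ≤ G := fun _ _ h => h.1

theorem le_foldr_min_iff (L : List (Sym2 V)) :
    (θ : WithTop ℝ) ≤ L.foldr (fun e m => min (A e : WithTop ℝ) m) ⊤ ↔ ∀ e ∈ L, θ ≤ A e := by
  induction L with
  | nil => simp
  | cons e L ih => simp [ih]

variable {G A θ}

theorem le_bottleneck_iff {i j : V} (p : G.Walk i j) :
    (θ : WithTop ℝ) ≤ bottleneck A p ↔ ∀ e ∈ p.edges, θ ≤ A e :=
  le_foldr_min_iff A θ p.edges

theorem le_bottleneck_of_thresholded {i j : V} (p : (thresholded G A θ).Walk i j) :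
    (θ : WithTop ℝ) ≤ bottleneck A p := by
  refine (le_bottleneck_iff p).mpr fun e he => ?_
  induction e with
  | h a b => exact (p.edges_subset_edgeSet he).2

theorem thresholded_reachable_iff_exists_le_bottleneck {k l : V} :
    (thresholded G A θ).Reachable k l ↔
      ∃ p : (thresholded G A θ).Walk k l, (θ : WithTop ℝ) ≤ bottleneck A p :=
  ⟨fun ⟨p⟩ => ⟨p, le_bottleneck_of_thresholded p⟩, fun ⟨p, _⟩ => ⟨p⟩⟩

end Thresholding

theorem stmt_13_general {V : Type*} (G : SimpleGraph V) (A : Sym2 V → ℝ)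
    (θ : ℝ) :
    ((∀ i j : V, G.Reachable i j ↔ (thresholded G A θ).Reachable i j) ↔
      (∀ k l : V, G.Adj k l → A s(k, l) < θ →
        ∃ p : (thresholded G A θ).Walk k l, (θ : WithTop ℝ) ≤ bottleneck A p)) ∧
    (∀ k l : V, G.Adj k l →
      (∃ p : (G.deleteEdges {s(k, l)}).Walk k l,
        (A s(k, l) : WithTop ℝ) < bottleneck A p) →
      ∀ i j : V, (G.deleteEdges {s(k, l)}).Reachable i j ↔ G.Reachable i j) := by
  refine ⟨?_, fun k l _ ⟨p, _⟩ i j => ?_⟩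
  · simp only [forall_reachable_iff_of_le (thresholded_le G A θ),
      ← thresholded_reachable_iff_exists_le_bottleneck]
    refine forall₂_congr fun k l => ⟨fun h hkl _ => h hkl, fun h hkl => ?_⟩
    by_cases hθ : θ ≤ A s(k, l)
    · exact Adj.reachable (G := thresholded G A θ) ⟨hkl, hθ⟩
    · exact h hkl (not_le.mp hθ)
  · have hkl : (G.deleteEdges {s(k, l)}).Reachable k l := ⟨p⟩
    exact ((forall_reachable_iff_of_le (G.deleteEdges_le _)).mpr
      (adj_le_reachable_deleteEdges_of_reachable hkl) i j).symm

/-- Thresholding at `θ` preserves the connected components iff every deleted edge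
has maximin affinity `≥ θ` in the remaining graph; in particular, deleting a
single edge whose weight is strictly below its maximin affinity in the remaining
graph does not change the connected components. -/
theorem stmt_13 {V : Type*} [Fintype V] (G : SimpleGraph V) (A : Sym2 V → ℝ)
    (θ : ℝ) :
    ((∀ i j : V, G.Reachable i j ↔ (thresholded G A θ).Reachable i j) ↔
      (∀ k l : V, G.Adj k l → A s(k, l) < θ →
        ∃ p : (thresholded G A θ).Walk k l, (θ : WithTop ℝ) ≤ bottleneck A p)) ∧
    (∀ k l : V, G.Adj k l →
      (∃ p : (G.deleteEdges {s(k, l)}).Walk k l,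
        (A s(k, l) : WithTop ℝ) < bottleneck A p) →
      ∀ i j : V, (G.deleteEdges {s(k, l)}).Reachable i j ↔ G.Reachable i j) :=
  stmt_13_general G A θ
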